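/- arXiv:2602.15225 — 2 statements merged into one kernel-verified Lean document; each statement's English description precedes it below -/
import Mathlib

section
/- In a position-optimization game with n ≥ 2/p_0 players, there exists a pure Nash equilibrium in which every player plays a pseudo-target in X* and every pseudo-target x ∈ X* is played by at least two players. -/
open Finset
open scoped ENNReal Classical

noncomputable def closestSet {X Y : Type*} {n : ℕ} (d : X → Y → ℝ≥0∞) (xs : Fin n → X)
    (y : Y) : Finset (Fin n) :=
  Finset.univ.filter fun i => ∀ j, d (xs i) y ≤ d (xs j) y

/-- Player `i`'s share of target `y`: `1/|X_min|` if `i` is among the closest players, else 0. -/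
noncomputable def share {X Y : Type*} {n : ℕ} (d : X → Y → ℝ≥0∞) (xs : Fin n → X) (y : Y)
    (i : Fin n) : ℝ :=
  if i ∈ closestSet d xs y then ((closestSet d xs y).card : ℝ)⁻¹ else 0

/-- Player `i`'s expected utility `E_{y∼Q}[π_i]`. -/
noncomputable def utility {X Y : Type*} [Fintype Y] {n : ℕ} (d : X → Y → ℝ≥0∞) (Q : Y → ℝ)
    (xs : Fin n → X) (i : Fin n) : ℝ :=
  ∑ y, Q y * share d xs y i

/-- Pure Nash equilibrium: no unilateral pure deviation strictly improves utility. -/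
def IsPureNash {X Y : Type*} [Fintype Y] {n : ℕ} (d : X → Y → ℝ≥0∞) (Q : Y → ℝ)
    (xs : Fin n → X) : Prop :=
  ∀ (i : Fin n) (x' : X), utility d Q (Function.update xs i x') i ≤ utility d Q xs i

/-- The projection `P` of `Q` onto pseudo-targets: `P x = Q({y : x*(y) = x})`. -/
noncomputable def projP {X Y : Type*} [Fintype Y] (Q : Y → ℝ) (xstar : Y → X) (x : X) : ℝ :=
  ∑ y ∈ Finset.univ.filter (fun y => xstar y = x), Q y

/-- Number of players playing position `x`. -/
noncomputable def kcount {X : Type*} {n : ℕ} (xs : Fin n → X) (x : X) : ℕ :=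
  (Finset.univ.filter (fun i => xs i = x)).card

lemma kcount_cons {X : Type*} {m : ℕ} (a : X) (xs : Fin m → X) (x : X) :
    kcount (Fin.cons a xs) x = (if a = x then 1 else 0) + kcount xs x := by
  classical
  simp only [kcount, Finset.card_filter]
  rw [Fin.sum_univ_succ]
  simp [Fin.cons_zero, Fin.cons_succ]

lemma exists_assignment {X : Type*} (S : Finset X) :
    ∀ (m : ℕ) (k : X → ℕ), (∑ x ∈ S, k x = m) →
      ∃ xs : Fin m → X, (∀ i, xs i ∈ S) ∧ ∀ x ∈ S, kcount xs x = k x := by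
  intro m
  induction m with
  | zero =>
    intro k hk
    refine ⟨Fin.elim0, fun i => i.elim0, fun x hx => ?_⟩
    have hkx : k x = 0 := (Finset.sum_eq_zero_iff.mp hk) x hx
    simp [kcount, hkx]
  | succ m ih =>
    intro k hk
    have hpos : ∃ x₀ ∈ S, k x₀ ≠ 0 := by
      by_contra h
      push_neg at h
      have : ∑ x ∈ S, k x = 0 := Finset.sum_eq_zero (fun x hx => h x hx)
      omega
    obtain ⟨x₀, hx₀S, hx₀⟩ := hpos
    have hle : k x₀ ≤ m + 1 := hk ▸ Finset.single_le_sum (fun x _ => Nat.zero_le _) hx₀S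
    have herase : k x₀ + ∑ x ∈ S.erase x₀, k x = m + 1 := by
      rw [Finset.add_sum_erase S k hx₀S, hk]
    have hsum' : ∑ x ∈ S, Function.update k x₀ (k x₀ - 1) x = m := by
      rw [Finset.sum_update_of_mem hx₀S, ← Finset.erase_eq]
      omega
    obtain ⟨xs, hmem, hcnt⟩ := ih _ hsum'
    refine ⟨Fin.cons x₀ xs, ?_, ?_⟩
    · intro i
      refine Fin.cases ?_ ?_ i
      · simpa using hx₀S
      · intro j; simpa using hmem j
    · intro x hx
      rw [kcount_cons, hcnt x hx]
      by_cases hxx : x = x₀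
      · rw [hxx, if_pos rfl, Function.update_self]
        omega
      · rw [Function.update_of_ne hxx, if_neg (Ne.symm hxx)]
        omega

lemma exists_alloc {X : Type*} (S : Finset X) (P : X → ℝ) (hP0 : ∀ x ∈ S, 0 ≤ P x)
    (hS : S.Nonempty) :
    ∀ m : ℕ, ∃ k : X → ℕ, (∑ x ∈ S, k x = m) ∧
      ∀ x ∈ S, ∀ x' ∈ S, P x' * (k x : ℝ) ≤ P x * ((k x' : ℝ) + 1) := by
  intro m
  induction m with
  | zero =>
    refine ⟨fun _ => 0, by simp, fun x hx x' hx' => ?_⟩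
    simp only [Nat.cast_zero, mul_zero, zero_add, mul_one]
    exact hP0 x hx
  | succ m ih =>
    obtain ⟨k, hk, hbal⟩ := ih
    obtain ⟨x₀, hx₀S, hmax⟩ := Finset.exists_max_image S (fun x => P x / ((k x : ℝ) + 1)) hS
    have hden : ∀ x : X, (0:ℝ) < (k x : ℝ) + 1 := fun x => by positivity
    have hmax' : ∀ x ∈ S, P x * ((k x₀ : ℝ) + 1) ≤ P x₀ * ((k x : ℝ) + 1) := by
      intro x hx
      exact (div_le_div_iff₀ (hden x) (hden x₀)).mp (hmax x hx)
    refine ⟨Function.update k x₀ (k x₀ + 1), ?_, ?_⟩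
    · rw [Finset.sum_update_of_mem hx₀S, ← Finset.erase_eq]
      have := Finset.add_sum_erase S k hx₀S
      omega
    · intro x hx x' hx'
      by_cases hxx : x = x₀ <;> by_cases hx'x : x' = x₀
      · rw [hxx, hx'x, Function.update_self]
        push_cast
        nlinarith [hP0 x₀ hx₀S]
      · rw [hxx, Function.update_self, Function.update_of_ne hx'x]
        push_cast
        have := hmax' x' hx'
        linarith
      · rw [hx'x, Function.update_of_ne hxx, Function.update_self]
        push_cast
        have h1 := hbal x hx x₀ hx₀S
        have h2 := hP0 x hx
        nlinarith
      · rw [Function.update_of_ne hxx, Function.update_of_ne hx'x]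
        exact hbal x hx x' hx'

lemma kcount_update {X : Type*} {n : ℕ} (xs : Fin n → X) (i : Fin n) (x' : X)
    (h : xs i ≠ x') :
    kcount (Function.update xs i x') x' = kcount xs x' + 1 := by
  classical
  unfold kcount
  have heq : Finset.univ.filter (fun j => Function.update xs i x' j = x') =
      insert i (Finset.univ.filter fun j => xs j = x') := by
    ext j
    by_cases hj : j = i
    · subst hj; simp [Function.update_self]
    · simp [Function.update_of_ne hj, hj]
  rw [heq, Finset.card_insert_of_notMem (by simp [h])]

lemma closest_eq {X Y : Type*} [Fintype Y] {n : ℕ} (d : X → Y → ℝ≥0∞)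
    (xstar : Y → X)
    (hmin : ∀ y x', d (xstar y) y ≤ d x' y)
    (xs : Fin n → X)
    (hcov : ∀ x ∈ Finset.univ.image xstar, ∃ j, xs j = x)
    (y : Y) (huy : ∀ x', d x' y ≤ d (xstar y) y → x' = xstar y) :
    closestSet d xs y = Finset.univ.filter fun i => xs i = xstar y := by
  ext i
  simp only [closestSet, Finset.mem_filter, Finset.mem_univ, true_and]
  constructor
  · intro h
    obtain ⟨j, hj⟩ := hcov (xstar y) (Finset.mem_image_of_mem _ (Finset.mem_univ y))
    exact huy (xs i) (hj ▸ h j)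
  · intro h j
    rw [h]
    exact hmin y (xs j)

lemma utility_eq {X Y : Type*} [Fintype Y] {n : ℕ} (d : X → Y → ℝ≥0∞) (Q : Y → ℝ)
    (xstar : Y → X)
    (hmin : ∀ y x', d (xstar y) y ≤ d x' y)
    (huniq : ∀ y, Q y ≠ 0 → ∀ x', d x' y ≤ d (xstar y) y → x' = xstar y)
    (xs : Fin n → X) (hcov : ∀ x ∈ Finset.univ.image xstar, ∃ j, xs j = x) (i : Fin n) :
    utility d Q xs i = projP Q xstar (xs i) * ((kcount xs (xs i) : ℝ))⁻¹ := by
  have hterm : ∀ y, Q y * share d xs y i =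
      (if xstar y = xs i then Q y else 0) * ((kcount xs (xs i) : ℝ))⁻¹ := by
    intro y
    by_cases hQy : Q y = 0
    · by_cases h : xstar y = xs i <;> simp [hQy, h]
    · rw [share, closest_eq d xstar hmin xs hcov y (huniq y hQy)]
      by_cases h : xs i = xstar y
      · rw [if_pos (by simp [h]), if_pos h.symm]
        have : (Finset.univ.filter fun j => xs j = xstar y).card = kcount xs (xs i) := by
          rw [kcount, h]
        rw [this, mul_comm (Q y)]
      · rw [if_neg (by simp [h]), if_neg (fun hh => h hh.symm)]
        ring
  rw [utility]
  calc ∑ y, Q y * share d xs y i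
      = ∑ y, (if xstar y = xs i then Q y else 0) * ((kcount xs (xs i) : ℝ))⁻¹ :=
        Finset.sum_congr rfl (fun y _ => hterm y)
    _ = (∑ y, if xstar y = xs i then Q y else 0) * ((kcount xs (xs i) : ℝ))⁻¹ := by
        rw [Finset.sum_mul]
    _ = projP Q xstar (xs i) * ((kcount xs (xs i) : ℝ))⁻¹ := by
        rw [projP, Finset.sum_filter]

/-- for `n ≥ 2/p₀`, there is a pure Nash equilibrium that is extreme with at
least two players on every pseudo-target. -/
theorem exists_pure_nash_extreme_two_per_target {X Y : Type*} [Fintype Y] {n : ℕ}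
    (d : X → Y → ℝ≥0∞) (Q : Y → ℝ) (hQ : ∀ y, 0 ≤ Q y) (hQsum : ∑ y, Q y = 1)
    (xstar : Y → X)
    (hmin : ∀ y x', d (xstar y) y ≤ d x' y)
    (huniq : ∀ y, Q y ≠ 0 → ∀ x', d x' y ≤ d (xstar y) y → x' = xstar y)
    (p0 : ℝ) (hp0pos : 0 < p0)
    (hp0le : ∀ y, p0 ≤ projP Q xstar (xstar y))
    (hp0mem : ∃ y, projP Q xstar (xstar y) = p0)
    (hn : 2 / p0 ≤ n) :
    ∃ xs : Fin n → X, IsPureNash d Q xs ∧ (∀ i, xs i ∈ Set.range xstar) ∧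
      (∀ x ∈ Set.range xstar, 2 ≤ kcount xs x) := by
  classical
  set S : Finset X := Finset.univ.image xstar with hS
  set P : X → ℝ := projP Q xstar with hP
  have hPnn : ∀ x, 0 ≤ P x := fun x => Finset.sum_nonneg (fun y _ => hQ y)
  have hPS : ∀ x ∈ S, p0 ≤ P x := by
    intro x hx
    obtain ⟨y, _, hy⟩ := Finset.mem_image.mp hx
    exact hy ▸ hp0le y
  have hPz : ∀ x ∉ S, P x = 0 := by
    intro x hx
    refine Finset.sum_eq_zero ?_
    intro y hy
    exact absurd ((Finset.mem_filter.mp hy).2 ▸ Finset.mem_image_of_mem xstar (Finset.mem_univ y))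
      hx
  have hPsum : ∑ x ∈ S, P x = 1 := by
    rw [hP]
    have := Finset.sum_fiberwise_of_maps_to
      (fun y (_ : y ∈ Finset.univ) => Finset.mem_image_of_mem xstar (Finset.mem_univ y)) Q
    simp only [projP]
    rw [this, hQsum]
  have hSne : S.Nonempty := by
    obtain ⟨y, _⟩ := hp0mem
    exact ⟨xstar y, Finset.mem_image_of_mem xstar (Finset.mem_univ y)⟩
  obtain ⟨k, hksum, hbal⟩ := exists_alloc S P (fun x hx => hPnn x) hSne n
  -- every pseudo-target gets at least 2 players
  have htwo : ∀ x ∈ S, 2 ≤ k x := by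
    by_contra h
    push_neg at h
    obtain ⟨x₀, hx₀S, hx₀⟩ := h
    have hkey : ∀ x ∈ S, p0 * (k x : ℝ) ≤ 2 * P x := by
      intro x hx
      have h1 := hbal x hx x₀ hx₀S
      have h2 : (k x₀ : ℝ) + 1 ≤ 2 := by
        have : k x₀ ≤ 1 := by omega
        have := (Nat.cast_le (α := ℝ)).mpr this
        push_cast at this ⊢
        linarith
      have h3 := hPS x₀ hx₀S
      have h4 := hPnn x
      have h5 : (0:ℝ) ≤ (k x : ℝ) := Nat.cast_nonneg _
      nlinarith
    have hstrict : p0 * (k x₀ : ℝ) < 2 * P x₀ := by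
      have h1 : (k x₀ : ℝ) ≤ 1 := by
        have : k x₀ ≤ 1 := by omega
        exact_mod_cast this
      have h3 := hPS x₀ hx₀S
      nlinarith
    have hsum_lt : ∑ x ∈ S, p0 * (k x : ℝ) < ∑ x ∈ S, 2 * P x :=
      Finset.sum_lt_sum (fun x hx => hkey x hx) ⟨x₀, hx₀S, hstrict⟩
    have hL : ∑ x ∈ S, p0 * (k x : ℝ) = p0 * n := by
      rw [← Finset.mul_sum]
      congr 1
      rw [← Nat.cast_sum, hksum]
    have hR : ∑ x ∈ S, 2 * P x = 2 := by
      rw [← Finset.mul_sum, hPsum, mul_one]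
    rw [hL, hR] at hsum_lt
    have : (n : ℝ) < 2 / p0 := (lt_div_iff₀ hp0pos).mpr (by linarith)
    linarith
  obtain ⟨xs, hmemS, hkc⟩ := exists_assignment S n k hksum
  have hcov : ∀ x ∈ S, ∃ j, xs j = x := by
    intro x hx
    have : 0 < kcount xs x := by rw [hkc x hx]; have := htwo x hx; omega
    obtain ⟨j, hj⟩ := Finset.card_pos.mp this
    exact ⟨j, (Finset.mem_filter.mp hj).2⟩
  refine ⟨xs, ?_, ?_, ?_⟩
  · -- Nash
    intro i x'
    set xs' := Function.update xs i x' with hxs'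
    have hcov' : ∀ x ∈ S, ∃ j, xs' j = x := by
      intro x hx
      have h2 : 1 < (Finset.univ.filter fun j => xs j = x).card := by
        have := hkc x hx; have := htwo x hx
        simp only [kcount] at *
        omega
      obtain ⟨a, ha, b, hb, hab⟩ := Finset.one_lt_card.mp h2
      by_cases hai : a = i
      · refine ⟨b, ?_⟩
        rw [hxs', Function.update_of_ne (by rw [hai] at hab; exact hab.symm)]
        exact (Finset.mem_filter.mp hb).2
      · refine ⟨a, ?_⟩
        rw [hxs', Function.update_of_ne hai]
        exact (Finset.mem_filter.mp ha).2
    have hU := utility_eq d Q xstar hmin huniq xs hcov i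
    have hU' := utility_eq d Q xstar hmin huniq xs' hcov' i
    have hxs'i : xs' i = x' := Function.update_self i x' xs
    by_cases hx'S : x' ∈ S
    · by_cases hx'i : x' = xs i
      · rw [hxs', hx'i, Function.update_eq_self]
      · have hkup : kcount xs' x' = k x' + 1 := by
          rw [hxs', kcount_update xs i x' (fun hh => hx'i hh.symm), hkc x' hx'S]
        rw [hU, hU', hxs'i, hkup, hkc (xs i) (hmemS i)]
        have hd1 : (0:ℝ) < ((k x' + 1 : ℕ) : ℝ) := by positivity
        have hd2 : (0:ℝ) < ((k (xs i) : ℕ) : ℝ) := by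
          have := htwo (xs i) (hmemS i)
          have : (2:ℝ) ≤ (k (xs i) : ℝ) := by exact_mod_cast this
          linarith
        rw [← div_eq_mul_inv, ← div_eq_mul_inv, div_le_div_iff₀ hd1 hd2]
        have := hbal (xs i) (hmemS i) x' hx'S
        push_cast
        push_cast at this
        linarith
    · have h0 : projP Q xstar x' = 0 := hPz x' hx'S
      rw [hU, hU', hxs'i, h0, zero_mul]
      exact mul_nonneg (hPnn (xs i)) (by positivity)
  · intro i
    obtain ⟨y, _, hy⟩ := Finset.mem_image.mp (hmemS i)
    exact ⟨y, hy⟩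
  · intro x hx
    obtain ⟨y, hy⟩ := hx
    have hxS : x ∈ S := hy ▸ Finset.mem_image_of_mem xstar (Finset.mem_univ y)
    rw [hkc x hxS]
    exact htwo x hxS
end

section
/- In a symmetric mixed equilibrium σ of a position-optimization game, for every pseudo-target x ∈ X*, the equilibrium probability satisfies σ(x) ≥ P(x) − 1/n. -/
open Finset
open scoped ENNReal Classical

/-- A mixed strategy on a finite position set. -/
def IsDist {X : Type*} [Fintype X] (σ : X → ℝ) : Prop :=
  (∀ x, 0 ≤ σ x) ∧ ∑ x, σ x = 1

/-- Expected utility of player `i` under a mixed strategy profile `σs`. -/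
noncomputable def mixedUtility {X Y : Type*} [Fintype X] [Fintype Y] {n : ℕ}
    (d : X → Y → ℝ≥0∞) (Q : Y → ℝ) (σs : Fin n → X → ℝ) (i : Fin n) : ℝ :=
  ∑ xs : Fin n → X, (∏ j, σs j (xs j)) * utility d Q xs i

/-- Symmetric mixed Nash equilibrium: when all play `σ`, no unilateral mixed deviation helps. -/
def IsSymmNash {X Y : Type*} [Fintype X] [Fintype Y] {n : ℕ} (d : X → Y → ℝ≥0∞) (Q : Y → ℝ)
    (σ : X → ℝ) : Prop :=
  ∀ (i : Fin n) (σ' : X → ℝ), IsDist σ' →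
    mixedUtility d Q (Function.update (fun _ => σ) i σ') i ≤
      mixedUtility d Q (fun (_ : Fin n) => σ) i

/-! Some player `i` gets at most `1/n` in equilibrium, since the players' utilities add up to the
total mass of `Q`. If `i` moves to the pseudo-target `x`, she splits `P(x)` with the `K ≥ 1` players
there, so she gets at least `P(x) 𝔼[1/K] ≥ P(x) / 𝔼[K]` (Jensen, via the tangent line
`1/k ≥ 2c - c²k` at `c = 1/𝔼[K]`), and `𝔼[K] = 1 + (n - 1) σ(x)`. Hence
`P(x) ≤ (1 + (n - 1) σ(x)) / n ≤ 1/n + σ(x)`. -/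
lemma two_mul_sub_sq_mul_le_inv {k : ℝ} (hk : 0 < k) (c : ℝ) : 2 * c - c ^ 2 * k ≤ k⁻¹ := by
  have hsq : 0 ≤ (1 - c * k) ^ 2 / k := by positivity
  have hexp : (1 - c * k) ^ 2 / k = k⁻¹ - (2 * c - c ^ 2 * k) := by field_simp; ring
  linarith

section ProductProfile

variable {X : Type*} [Fintype X] {n : ℕ} {σs : Fin n → X → ℝ}

lemma sum_prod_eq_one (hσs : ∀ j, ∑ x, σs j x = 1) :
    ∑ xs : Fin n → X, ∏ j, σs j (xs j) = 1 := by
  rw [← Fintype.prod_sum]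
  exact prod_eq_one fun j _ => hσs j

lemma sum_prod_mul_indicator (hσs : ∀ j, ∑ x, σs j x = 1) (j : Fin n) (x : X) :
    ∑ xs : Fin n → X, (∏ k, σs k (xs k)) * (if xs j = x then 1 else 0) = σs j x := by
  let g : Fin n → X → ℝ := fun k x' => σs k x' * if k = j then (if x' = x then 1 else 0) else 1
  have hg : ∀ xs : Fin n → X,
      (∏ k, σs k (xs k)) * (if xs j = x then 1 else 0) = ∏ k, g k (xs k) := by
    intro xs
    simp only [g, prod_mul_distrib, prod_ite_eq', mem_univ, if_true]
  have hg_sum : ∀ k, ∑ x', g k x' = if k = j then σs j x else 1 := by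
    intro k
    by_cases hk : k = j
    · subst hk; simp [g]
    · simp [g, hk, hσs k]
  simp_rw [hg, ← Fintype.prod_sum, hg_sum, prod_ite_eq', mem_univ, if_true]

lemma sum_prod_mul_kcount (hσs : ∀ j, ∑ x, σs j x = 1) (x : X) :
    ∑ xs : Fin n → X, (∏ j, σs j (xs j)) * (kcount xs x : ℝ) = ∑ j, σs j x := by
  simp_rw [kcount, card_filter, Nat.cast_sum, Nat.cast_ite, Nat.cast_one, Nat.cast_zero,
    mul_sum]
  rw [sum_comm]
  exact sum_congr rfl fun j _ => sum_prod_mul_indicator hσs j x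

end ProductProfile

section Shares

variable {X Y : Type*} {n : ℕ} (d : X → Y → ℝ≥0∞)

lemma closestSet_nonempty [NeZero n] (xs : Fin n → X) (y : Y) :
    (closestSet d xs y).Nonempty := by
  obtain ⟨i, -, hi⟩ := exists_min_image univ (fun j => d (xs j) y) univ_nonempty
  exact ⟨i, by simpa [closestSet] using hi⟩

lemma share_nonneg (xs : Fin n → X) (y : Y) (i : Fin n) : 0 ≤ share d xs y i := by
  unfold share
  split_ifs <;> positivity

lemma sum_share [NeZero n] (xs : Fin n → X) (y : Y) : ∑ i, share d xs y i = 1 := by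
  have hcard : ((closestSet d xs y).card : ℝ) ≠ 0 := by
    exact_mod_cast (closestSet_nonempty d xs y).card_pos.ne'
  simp only [share, sum_ite_mem, univ_inter, sum_const, nsmul_eq_mul, mul_inv_cancel₀ hcard]

lemma closestSet_eq_filter {y : Y} {x : X} (hx : ∀ x', d x' y ≤ d x y → x' = x)
    {xs : Fin n → X} {i : Fin n} (hi : xs i = x) :
    closestSet d xs y = univ.filter fun j => xs j = x := by
  have : NeZero n := ⟨i.pos.ne'⟩
  have hclosest : ∀ j ∈ closestSet d xs y, xs j = x := fun j hj =>
    hx _ (hi ▸ (mem_filter.mp hj).2 i)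
  obtain ⟨j₀, hj₀⟩ := closestSet_nonempty d xs y
  ext j
  refine ⟨fun hj => by simpa using hclosest j hj, fun hj => ?_⟩
  simp only [closestSet, mem_filter, mem_univ, true_and] at hj hj₀ ⊢
  rw [hj, ← hclosest j₀ (by simpa [closestSet] using hj₀)]
  exact hj₀

lemma share_eq_inv_kcount {y : Y} {x : X} (hx : ∀ x', d x' y ≤ d x y → x' = x)
    {xs : Fin n → X} {i : Fin n} (hi : xs i = x) :
    share d xs y i = (kcount xs x : ℝ)⁻¹ := by
  rw [share, closestSet_eq_filter d hx hi, if_pos (by simpa using hi), kcount]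

end Shares

section Utility

variable {X Y : Type*} [Fintype Y] {n : ℕ} (d : X → Y → ℝ≥0∞) {Q : Y → ℝ}

lemma sum_utility [NeZero n] (xs : Fin n → X) : ∑ i, utility d Q xs i = ∑ y, Q y := by
  simp only [utility]
  rw [sum_comm]
  simp only [← mul_sum, sum_share, mul_one]

lemma projP_div_kcount_le_utility (hQ : ∀ y, 0 ≤ Q y) {xstar : Y → X}
    (huniq : ∀ y, Q y ≠ 0 → ∀ x', d x' y ≤ d (xstar y) y → x' = xstar y)
    (xs : Fin n → X) (i : Fin n) :
    projP Q xstar (xs i) / kcount xs (xs i) ≤ utility d Q xs i := by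
  have hshare : ∀ y ∈ univ.filter (fun y => xstar y = xs i),
      Q y * (kcount xs (xs i) : ℝ)⁻¹ = Q y * share d xs y i := by
    intro y hy
    rcases eq_or_ne (Q y) 0 with hQy | hQy
    · simp [hQy]
    · have hx := huniq y hQy
      rw [(mem_filter.mp hy).2] at hx
      rw [share_eq_inv_kcount d hx rfl]
  calc projP Q xstar (xs i) / kcount xs (xs i)
      = ∑ y ∈ univ.filter (fun y => xstar y = xs i), Q y * share d xs y i := by
        rw [projP, div_eq_mul_inv, sum_mul]
        exact sum_congr rfl hshare
    _ ≤ utility d Q xs i :=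
        sum_le_sum_of_subset_of_nonneg (filter_subset _ _)
          fun y _ _ => mul_nonneg (hQ y) (share_nonneg d xs y i)

end Utility

lemma isDist_single {X : Type*} [Fintype X] (x : X) : IsDist (Pi.single x (1 : ℝ)) :=
  ⟨fun x' => by by_cases h : x' = x <;> simp [h], by simp⟩

section MixedUtility

variable {X Y : Type*} [Fintype X] [Fintype Y] {n : ℕ} (d : X → Y → ℝ≥0∞) {Q : Y → ℝ}
  {σs : Fin n → X → ℝ}

lemma sum_mixedUtility [NeZero n] (hσs : ∀ j, ∑ x, σs j x = 1) :
    ∑ i, mixedUtility d Q σs i = ∑ y, Q y := by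
  simp only [mixedUtility]
  rw [sum_comm]
  simp only [← mul_sum, sum_utility, ← sum_mul, sum_prod_eq_one hσs, one_mul]

lemma projP_div_le_mixedUtility_of_pure (hQ : ∀ y, 0 ≤ Q y) {xstar : Y → X}
    (huniq : ∀ y, Q y ≠ 0 → ∀ x', d x' y ≤ d (xstar y) y → x' = xstar y)
    (hσs : ∀ j, IsDist (σs j)) {i : Fin n} {x : X} (hi : σs i = Pi.single x 1) :
    projP Q xstar x / ∑ j, σs j x ≤ mixedUtility d Q σs i := by
  set p := projP Q xstar x
  set m := ∑ j, σs j x with hm_def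
  have hm : 1 ≤ m := by
    simpa [hi] using single_le_sum (fun j _ => (hσs j).1 x) (mem_univ i)
  have hp : 0 ≤ p := sum_nonneg fun y _ => hQ y
  have hpoint : ∀ xs : Fin n → X, (∏ j, σs j (xs j)) * (p * (2 * m⁻¹ - m⁻¹ ^ 2 * kcount xs x))
      ≤ (∏ j, σs j (xs j)) * utility d Q xs i := by
    intro xs
    by_cases hxi : xs i = x
    · have hk : (0 : ℝ) < kcount xs x := by
        exact_mod_cast card_pos.mpr ⟨i, by simp [hxi]⟩
      refine mul_le_mul_of_nonneg_left ?_ (prod_nonneg fun j _ => (hσs j).1 _)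
      calc p * (2 * m⁻¹ - m⁻¹ ^ 2 * kcount xs x) ≤ p / kcount xs x :=
            mul_le_mul_of_nonneg_left (two_mul_sub_sq_mul_le_inv hk m⁻¹) hp
        _ ≤ utility d Q xs i := by
            simpa only [hxi] using projP_div_kcount_le_utility d hQ huniq xs i
    · have hzero : σs i (xs i) = 0 := by rw [hi, Pi.single_eq_of_ne hxi]
      simp [prod_eq_zero (f := fun j => σs j (xs j)) (mem_univ i) hzero]
  have hσs_sum : ∀ j, ∑ x, σs j x = 1 := fun j => (hσs j).2
  calc p / m = p * (2 * m⁻¹) * 1 - p * m⁻¹ ^ 2 * m := by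
        field_simp
        ring
    _ = ∑ xs : Fin n → X, (∏ j, σs j (xs j)) * (p * (2 * m⁻¹ - m⁻¹ ^ 2 * kcount xs x)) := by
        rw [← sum_prod_eq_one hσs_sum, hm_def, ← sum_prod_mul_kcount hσs_sum x, mul_sum, mul_sum,
          ← sum_sub_distrib]
        exact sum_congr rfl fun xs _ => by ring
    _ ≤ mixedUtility d Q σs i := sum_le_sum fun xs _ => hpoint xs

end MixedUtility

theorem symm_nash_lower_bound_general {X Y : Type*} [Fintype X] [Fintype Y] {n : ℕ}
    (d : X → Y → ℝ≥0∞) (Q : Y → ℝ) (hQ : ∀ y, 0 ≤ Q y) (hQsum : ∑ y, Q y = 1)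
    (xstar : Y → X)
    (huniq : ∀ y, Q y ≠ 0 → ∀ x', d x' y ≤ d (xstar y) y → x' = xstar y)
    (p0 : ℝ)
    (hn : max 43 ((32 / p0) * Real.log (1 / p0)) < n)
    (σ : X → ℝ) (hσ : IsDist σ) (hnash : IsSymmNash (n := n) d Q σ) :
    ∀ x ∈ Set.range xstar, projP Q xstar x - 1 / n ≤ σ x := by
  intro x _
  have hn_gt : (43 : ℝ) < n := (le_max_left _ _).trans_lt hn
  have hn_pos : (0 : ℝ) < n := by linarith
  have : NeZero n := ⟨Nat.cast_ne_zero.mp hn_pos.ne'⟩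
  obtain ⟨i, -, hi⟩ := exists_le_of_sum_le (f := mixedUtility d Q fun _ => σ)
    (g := fun _ => 1 / (n : ℝ)) (univ_nonempty (α := Fin n)) (by
      rw [sum_mixedUtility d fun _ => hσ.2, hQsum]
      simp [hn_pos.ne'])
  set σs := Function.update (fun _ : Fin n => σ) i (Pi.single x 1)
  have hσs : ∀ j, IsDist (σs j) := by
    intro j
    by_cases hj : j = i
    · simpa [σs, hj] using isDist_single x
    · simpa [σs, hj] using hσ
  have hcount : ∑ j, σs j x = n * σ x + (1 - σ x) := by
    have h : ∀ j, σs j x = σ x + if j = i then 1 - σ x else 0 := by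
      intro j
      by_cases hj : j = i <;> simp [σs, hj]
    simp only [h, sum_add_distrib, sum_const, card_univ, Fintype.card_fin, nsmul_eq_mul,
      sum_ite_eq', mem_univ, if_true]
  have hdev := (projP_div_le_mixedUtility_of_pure d hQ huniq hσs (Function.update_self ..)).trans
    ((hnash i (Pi.single x 1) (isDist_single x)).trans hi)
  have hq := hσ.1 x
  have hm_pos : 0 < n * σ x + (1 - σ x) := by
    nlinarith [mul_nonneg (by linarith : (0 : ℝ) ≤ n - 1) hq]
  rw [hcount, div_le_div_iff₀ hm_pos hn_pos] at hdev
  calc projP Q xstar x - 1 / n ≤ (n * σ x + (1 - σ x)) / n - 1 / n := by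
        gcongr
        rw [le_div_iff₀ hn_pos]
        linarith
    _ = σ x - σ x / n := by
        field_simp
        ring
    _ ≤ σ x := by linarith [div_nonneg hq hn_pos.le]

/-- in a symmetric mixed equilibrium, `σ(x) ≥ P(x) - 1/n` for every
pseudo-target `x ∈ X*`. -/
theorem symm_nash_lower_bound {X Y : Type*} [Fintype X] [Fintype Y] {n : ℕ}
    (d : X → Y → ℝ≥0∞) (Q : Y → ℝ) (hQ : ∀ y, 0 ≤ Q y) (hQsum : ∑ y, Q y = 1)
    (xstar : Y → X)
    (hmin : ∀ y x', d (xstar y) y ≤ d x' y)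
    (huniq : ∀ y, Q y ≠ 0 → ∀ x', d x' y ≤ d (xstar y) y → x' = xstar y)
    (p0 : ℝ) (hp0pos : 0 < p0)
    (hp0le : ∀ y, p0 ≤ projP Q xstar (xstar y))
    (hp0mem : ∃ y, projP Q xstar (xstar y) = p0)
    (hn : max 43 ((32 / p0) * Real.log (1 / p0)) < n)
    (σ : X → ℝ) (hσ : IsDist σ) (hnash : IsSymmNash (n := n) d Q σ) :
    ∀ x ∈ Set.range xstar, projP Q xstar x - 1 / n ≤ σ x :=
  symm_nash_lower_bound_general d Q hQ hQsum xstar huniq p0 hn σ hσ hnash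
end
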